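/- arXiv:2306.10806 — 2 statements merged into one kernel-verified Lean document; each statement's English description precedes it below -/
import Mathlib

section
/- For integers 1 ≤ q ≤ m ≤ n, ∑_{k=q+1}^{m} C(m,k) C(n-m, m-k) (k/m) = ∑_{k=q}^{m-1} C(m-1,k) C(n-m, m-1-k) ≤ C(m-1,q) C(n-q-1, m-q-1), and hence C(n,m)^{-1} ∑_{k=q+1}^m C(m,k) C(n-m,m-k) (k/m) ≤ C(m-1,q) (m/n)^{q+1}. -/
/-!
The equality is the absorption identity `C(m, k) * k / m = C(m - 1, k - 1)` followed by a shift
of the summation index. For the first bound, `C(m - 1, k) ≤ C(m - 1, k) C(k, q)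
= C(m - 1, q) C(m - 1 - q, k - q)`, and Vandermonde's identity sums the remaining products to
`C(n - q - 1, m - q - 1)`. Finally
`C(n - q - 1, m - q - 1) / C(n, m) = ∏_{i ≤ q} (m - i) / (n - i)`, and each factor is at most
`m / n`.
-/

open Finset

namespace Nat

theorem descFactorial_mul_pow_le_of_le {m n : ℕ} (hmn : m ≤ n) (j : ℕ) :
    m.descFactorial j * n ^ j ≤ n.descFactorial j * m ^ j := by
  induction j with
  | zero => simp
  | succ j ih =>
    have hstep : (m - j) * n ≤ (n - j) * m := by
      rcases le_total m j with hmj | hjm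
      · simp [Nat.sub_eq_zero_of_le hmj]
      · obtain ⟨a, rfl⟩ := Nat.exists_eq_add_of_le hjm
        obtain ⟨b, rfl⟩ := Nat.exists_eq_add_of_le hmn
        simp only [Nat.add_sub_cancel_left, show j + a + b - j = a + b by omega]
        nlinarith
    rw [descFactorial_succ, descFactorial_succ, pow_succ, pow_succ]
    calc (m - j) * m.descFactorial j * (n ^ j * n)
        = m.descFactorial j * n ^ j * ((m - j) * n) := by ring
      _ ≤ n.descFactorial j * m ^ j * ((n - j) * m) := Nat.mul_le_mul ih hstep
      _ = (n - j) * n.descFactorial j * (m ^ j * m) := by ring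

theorem choose_mul_descFactorial {j m n : ℕ} (hjm : j ≤ m) :
    n.choose m * m.descFactorial j = n.descFactorial j * (n - j).choose (m - j) := by
  rw [descFactorial_eq_factorial_mul_choose, descFactorial_eq_factorial_mul_choose,
    mul_left_comm, choose_mul hjm, mul_assoc]

theorem choose_sub_mul_pow_le {j m n : ℕ} (hjm : j ≤ m) (hmn : m ≤ n) :
    (n - j).choose (m - j) * n ^ j ≤ n.choose m * m ^ j := by
  have hpos : 0 < n.descFactorial j := descFactorial_pos.2 (hjm.trans hmn)
  refine Nat.le_of_mul_le_mul_left ?_ hpos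
  calc n.descFactorial j * ((n - j).choose (m - j) * n ^ j)
      = n.choose m * (m.descFactorial j * n ^ j) := by
        rw [← mul_assoc, ← choose_mul_descFactorial hjm, mul_assoc]
    _ ≤ n.choose m * (n.descFactorial j * m ^ j) :=
        Nat.mul_le_mul_left _ (descFactorial_mul_pow_le_of_le hmn j)
    _ = n.descFactorial j * (n.choose m * m ^ j) := by ring

theorem sum_Icc_choose_sub_mul_choose (q a s : ℕ) :
    ∑ k ∈ Icc q (q + a), a.choose (k - q) * s.choose (q + a - k) = (a + s).choose a := by
  rw [← Ico_add_one_right_eq_Icc, sum_Ico_eq_sum_range, add_choose_eq,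
    Nat.sum_antidiagonal_eq_sum_range_succ_mk]
  refine sum_congr (by congr 1; omega) fun i hi => ?_
  rw [mem_range] at hi
  congr 2 <;> omega

theorem sum_Icc_choose_mul_choose_le (q N s : ℕ) :
    ∑ k ∈ Icc q N, N.choose k * s.choose (N - k)
      ≤ N.choose q * (N - q + s).choose (N - q) := by
  rcases lt_or_ge N q with hNq | hqN
  · simp [Icc_eq_empty_of_lt hNq]
  obtain ⟨a, rfl⟩ := Nat.exists_eq_add_of_le hqN
  rw [Nat.add_sub_cancel_left, ← sum_Icc_choose_sub_mul_choose q a s, mul_sum]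
  refine sum_le_sum fun k hk => ?_
  have hqk : q ≤ k := (mem_Icc.1 hk).1
  calc (q + a).choose k * s.choose (q + a - k)
      ≤ (q + a).choose k * k.choose q * s.choose (q + a - k) :=
        Nat.mul_le_mul_right _ (Nat.le_mul_of_pos_right _ (choose_pos hqk))
    _ = (q + a).choose q * (a.choose (k - q) * s.choose (q + a - k)) := by
        rw [choose_mul hqk, Nat.add_sub_cancel_left, mul_assoc]

end Nat

theorem sum_Icc_choose_mul_div_eq {K : Type*} [Field K] [CharZero K] (q m : ℕ) (hm : 0 < m)
    (f : ℕ → K) :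
    ∑ k ∈ Icc (q + 1) m, (m.choose k : K) * f k * ((k : K) / m)
      = ∑ k ∈ Icc q (m - 1), ((m - 1).choose k : K) * f (k + 1) := by
  obtain ⟨N, rfl⟩ : ∃ N, m = N + 1 := ⟨m - 1, by omega⟩
  rw [Nat.add_sub_cancel, ← Ico_add_one_right_eq_Icc, ← Ico_add_one_right_eq_Icc,
    ← sum_Ico_add']
  refine sum_congr rfl fun k _ => ?_
  have habs :
      ((N + 1 : ℕ) : K) * (N.choose k : K) = ((N + 1).choose (k + 1) : K) * ((k : K) + 1) :=
    mod_cast Nat.add_one_mul_choose_eq N k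
  push_cast at habs ⊢
  field_simp
  linear_combination -f (k + 1) * habs

theorem stmt_9 (q m n : ℕ) (hq : 1 ≤ q) (hqm : q ≤ m) (hmn : m ≤ n) :
    (∑ k ∈ Finset.Icc (q + 1) m,
        (m.choose k : ℝ) * ((n - m).choose (m - k) : ℝ) * ((k : ℝ) / (m : ℝ)))
      = ∑ k ∈ Finset.Icc q (m - 1),
          ((m - 1).choose k : ℝ) * ((n - m).choose (m - 1 - k) : ℝ) ∧
    (∑ k ∈ Finset.Icc q (m - 1),
        ((m - 1).choose k : ℝ) * ((n - m).choose (m - 1 - k) : ℝ))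
      ≤ ((m - 1).choose q : ℝ) * ((n - q - 1).choose (m - q - 1) : ℝ) ∧
    ((n.choose m : ℝ))⁻¹ * ∑ k ∈ Finset.Icc (q + 1) m,
        (m.choose k : ℝ) * ((n - m).choose (m - k) : ℝ) * ((k : ℝ) / (m : ℝ))
      ≤ ((m - 1).choose q : ℝ) * ((m : ℝ) / (n : ℝ)) ^ (q + 1) := by
  have hA :
      (∑ k ∈ Icc (q + 1) m, (m.choose k : ℝ) * ((n - m).choose (m - k) : ℝ) * ((k : ℝ) / m))
      = ∑ k ∈ Icc q (m - 1), ((m - 1).choose k : ℝ) * ((n - m).choose (m - 1 - k) : ℝ) := by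
    rw [sum_Icc_choose_mul_div_eq q m (by omega)]
    simp only [Nat.sub_sub, Nat.add_comm 1]
  refine ⟨hA, ?_⟩
  rw [hA]
  rcases hqm.eq_or_lt with rfl | hlt
  · simp only [Icc_eq_empty (by omega : ¬q ≤ q - 1), sum_empty, mul_zero]
    exact ⟨by positivity, by positivity⟩
  have hB : (∑ k ∈ Icc q (m - 1), ((m - 1).choose k : ℝ) * ((n - m).choose (m - 1 - k) : ℝ))
      ≤ ((m - 1).choose q : ℝ) * ((n - q - 1).choose (m - q - 1) : ℝ) := by
    have h := Nat.sum_Icc_choose_mul_choose_le q (m - 1) (n - m)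
    rw [show m - 1 - q + (n - m) = n - q - 1 by omega, show m - 1 - q = m - q - 1 by omega] at h
    exact_mod_cast h
  have hC : ((n - q - 1).choose (m - q - 1) : ℝ) * (n : ℝ) ^ (q + 1)
      ≤ (n.choose m : ℝ) * (m : ℝ) ^ (q + 1) := by
    have h := Nat.choose_sub_mul_pow_le (j := q + 1) hlt hmn
    rw [← Nat.sub_sub, ← Nat.sub_sub] at h
    exact_mod_cast h
  have hnm : (0 : ℝ) < n.choose m := by exact_mod_cast Nat.choose_pos hmn
  have hn : (0 : ℝ) < n := by exact_mod_cast (by omega : 0 < n)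
  refine ⟨hB, ?_⟩
  rw [inv_mul_le_iff₀ hnm, div_pow, ← mul_div_assoc, mul_div_assoc',
    le_div_iff₀ (by positivity)]
  calc _ ≤ ((m - 1).choose q : ℝ) * ((n - q - 1).choose (m - q - 1) : ℝ) * (n : ℝ) ^ (q + 1) :=
        mul_le_mul_of_nonneg_right hB (by positivity)
    _ ≤ ((m - 1).choose q : ℝ) * ((n.choose m : ℝ) * (m : ℝ) ^ (q + 1)) := by
        rw [mul_assoc]; exact mul_le_mul_of_nonneg_left hC (by positivity)
    _ = _ := by ring
end

section
/- Error bound propagation for ξ: suppose |θ̂_j − θ_j| ≤ c for j ∈ {1,2,4}, that θ_2 − θ_1 > 0, θ̂_2 − θ̂_1 > 0, and that (θ_4 − θ_2)/(θ_2 − θ_1) = 2^ξ and (θ̂_4 − θ̂_2)/(θ̂_2 − θ̂_1) = 2^{ξ̂} with both ratios positive. Then |ξ̂ − ξ| ≤ c (2^ξ + 1)(2^{−ξ̂} + 2^{−ξ}) / (log 2 · (θ̂_2 − θ̂_1)). -/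
lemma log_diff_le_aux {a b : ℝ} (ha : 0 < a) (hb : 0 < b) (hab : a ≤ b) :
    Real.log b - Real.log a ≤ |a - b| * (1 / a + 1 / b) / 2 := by
  have hba : (1 : ℝ) ≤ b / a := (one_le_div ha).mpr hab
  have hlog : 0 ≤ Real.log (b / a) := Real.log_nonneg hba
  have h1 : Real.log (b / a) ≤ Real.sinh (Real.log (b / a)) :=
    Real.self_le_sinh_iff.mpr hlog
  rw [Real.sinh_log (by positivity)] at h1
  rw [Real.log_div (ne_of_gt hb) (ne_of_gt ha)] at h1
  have habs : |a - b| = b - a := by rw [abs_sub_comm]; exact abs_of_nonneg (by linarith)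
  rw [habs]
  have : (b / a - (b / a)⁻¹) / 2 = (b - a) * (1 / a + 1 / b) / 2 := by
    field_simp
    ring
  linarith [this ▸ h1]

lemma log_abs_bound {a b : ℝ} (ha : 0 < a) (hb : 0 < b) :
    |Real.log a - Real.log b| ≤ |a - b| * (1 / a + 1 / b) / 2 := by
  rcases le_total a b with h | h
  · rw [abs_sub_comm]
    have := log_diff_le_aux ha hb h
    have hm : Real.log a ≤ Real.log b := Real.log_le_log ha h
    rwa [abs_of_nonneg (by linarith)]
  · have := log_diff_le_aux hb ha h
    have hm : Real.log b ≤ Real.log a := Real.log_le_log hb h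
    rw [abs_sub_comm] at this
    rw [abs_of_nonneg (by linarith)]
    linarith

theorem stmt_16 (θh1 θh2 θh4 θ1 θ2 θ4 c ξ ξh : ℝ)
    (hc1 : |θh1 - θ1| ≤ c) (hc2 : |θh2 - θ2| ≤ c) (hc4 : |θh4 - θ4| ≤ c)
    (hpos : 0 < θ2 - θ1) (hposh : 0 < θh2 - θh1)
    (hξ : (θ4 - θ2) / (θ2 - θ1) = (2 : ℝ) ^ ξ)
    (hξh : (θh4 - θh2) / (θh2 - θh1) = (2 : ℝ) ^ ξh)
    (hr : 0 < (θ4 - θ2) / (θ2 - θ1)) (hrh : 0 < (θh4 - θh2) / (θh2 - θh1)) :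
    |ξh - ξ| ≤ c * ((2 : ℝ) ^ ξ + 1) * ((2 : ℝ) ^ (-ξh) + (2 : ℝ) ^ (-ξ))
        / (Real.log 2 * (θh2 - θh1)) := by
  set r : ℝ := (2 : ℝ) ^ ξ with hrdef
  set rh : ℝ := (2 : ℝ) ^ ξh with hrhdef
  have hrpos : 0 < r := Real.rpow_pos_of_pos two_pos ξ
  have hrhpos : 0 < rh := Real.rpow_pos_of_pos two_pos ξh
  have hl2 : 0 < Real.log 2 := Real.log_pos one_lt_two
  have hc0 : 0 ≤ c := le_trans (abs_nonneg _) hc1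
  -- log of r, rh
  have hlogr : Real.log r = ξ * Real.log 2 := Real.log_rpow two_pos ξ
  have hlogrh : Real.log rh = ξh * Real.log 2 := Real.log_rpow two_pos ξh
  -- difference of ratios bound
  have hA : |(θh4 - θh2) - (θ4 - θ2)| ≤ 2 * c := by
    have := abs_sub (θh4 - θ4) (θh2 - θ2)
    calc |(θh4 - θh2) - (θ4 - θ2)| = |(θh4 - θ4) - (θh2 - θ2)| := by ring_nf
      _ ≤ |θh4 - θ4| + |θh2 - θ2| := abs_sub _ _
      _ ≤ 2 * c := by linarith
  have hB : |(θ2 - θ1) - (θh2 - θh1)| ≤ 2 * c := by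
    calc |(θ2 - θ1) - (θh2 - θh1)| = |(θh1 - θ1) - (θh2 - θ2)| := by ring_nf
      _ ≤ |θh1 - θ1| + |θh2 - θ2| := abs_sub _ _
      _ ≤ 2 * c := by linarith
  have hdiff : |rh - r| ≤ 2 * c * (r + 1) / (θh2 - θh1) := by
    have hid : rh - r = ((θh4 - θh2) - (θ4 - θ2)) / (θh2 - θh1)
        + r * ((θ2 - θ1) - (θh2 - θh1)) / (θh2 - θh1) := by
      rw [← hξ, ← hξh]
      field_simp
      ring
    rw [hid]
    calc |((θh4 - θh2) - (θ4 - θ2)) / (θh2 - θh1)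
        + r * ((θ2 - θ1) - (θh2 - θh1)) / (θh2 - θh1)|
        ≤ |((θh4 - θh2) - (θ4 - θ2)) / (θh2 - θh1)|
          + |r * ((θ2 - θ1) - (θh2 - θh1)) / (θh2 - θh1)| := abs_add_le _ _
      _ = |(θh4 - θh2) - (θ4 - θ2)| / (θh2 - θh1)
          + r * |(θ2 - θ1) - (θh2 - θh1)| / (θh2 - θh1) := by
          rw [abs_div, abs_div, abs_mul, abs_of_pos hposh, abs_of_pos hrpos]
      _ ≤ 2 * c / (θh2 - θh1) + r * (2 * c) / (θh2 - θh1) := by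
          gcongr
      _ = 2 * c * (r + 1) / (θh2 - θh1) := by ring
  -- log bound
  have hlb : |Real.log rh - Real.log r| ≤ |rh - r| * (1 / rh + 1 / r) / 2 :=
    log_abs_bound hrhpos hrpos
  have hxi : |ξh - ξ| = |Real.log rh - Real.log r| / Real.log 2 := by
    rw [hlogr, hlogrh, ← sub_mul, abs_mul, abs_of_pos hl2, mul_div_assoc,
      div_self (ne_of_gt hl2), mul_one]
  have hinv : (2 : ℝ) ^ (-ξh) = 1 / rh ∧ (2 : ℝ) ^ (-ξ) = 1 / r := by
    constructor <;> · rw [Real.rpow_neg (by norm_num)]; simp [hrdef, hrhdef]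
  obtain ⟨hi1, hi2⟩ := hinv
  rw [hxi, hi1, hi2]
  have hsum : 0 ≤ 1 / rh + 1 / r := by positivity
  have step : |Real.log rh - Real.log r| ≤
      (2 * c * (r + 1) / (θh2 - θh1)) * (1 / rh + 1 / r) / 2 := by
    refine hlb.trans ?_
    gcongr
  calc |Real.log rh - Real.log r| / Real.log 2
      ≤ ((2 * c * (r + 1) / (θh2 - θh1)) * (1 / rh + 1 / r) / 2) / Real.log 2 :=
        by gcongr
    _ = c * (r + 1) * (1 / rh + 1 / r) / (Real.log 2 * (θh2 - θh1)) := by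
        field_simp
end
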